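/- arXiv:1109.1895 — 5 statements merged into one kernel-verified Lean document; each statement's English description precedes it below -/
import Mathlib

section
/- (Lemma 1, Chernoff-type probability bound) Let n ≥ 1, l ≥ 1 be integers, and let B ∈ ℝ^{n×l} be a fixed matrix such that the geometric mean of the diagonal entries of (1/n)·BᵀB equals α > 0, i.e., (∏_{i=1}^l [(1/n)BᵀB]_{i,i})^{1/l} = α. Let S ⊆ [l] be fixed, and let D ∈ ℝ^{n×l} be a random matrix with mutually independent columns such that for j ∈ S the j-th column D_j is distributed N(0, θ_j·I_n) with some θ_j > 0, and for j ∈ [l]∖S the j-th column D_j is identically zero. Then for every γ ∈ (0, α): P( (1/(nl))·‖B − D‖_F² ≤ γ ) ≤ 2^{−(n/2)·log₂(α^l/γ^l)} = (γ/α)^{nl/2}. -/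
open MeasureTheory ProbabilityTheory Matrix
open scoped NNReal ENNReal
open Real

/-!
Chernoff's bound with `t = 1 / (2γ)` gives `P(‖B - D‖² ≤ nlγ) ≤ e^{t nlγ} E e^{-t ‖B - D‖²}`,
and `e^{t nlγ} = e^{nl/2}`. The expectation factors over the entries, and for `X ~ N(0, v)` one
has `E e^{-t (b - X)²} = (1 + 2tv)^{-1/2} e^{-t b² / (1 + 2tv)}`. Column `j` therefore contributes
`u^{-n/2} e^{-n a_j / (2γu)}` with `u = 1 + 2tθ_j` and `a_j = [(1/n) BᵀB]_{jj}`; whatever `θ_j` is,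
this is at most the maximum over `u > 0`, namely `(γ / a_j)^{n/2} e^{-n/2}`. Multiplying over the
columns gives `(γ/α)^{nl/2} e^{-nl/2}`, and the exponential factors cancel.
-/

theorem integral_exp_neg_mul_sq_sub (a c : ℝ) :
    ∫ x, exp (-(a * (x - c) ^ 2)) = √(π / a) := by
  rw [integral_sub_right_eq_self (fun x => exp (-(a * x ^ 2))) c]
  simpa only [neg_mul] using integral_gaussian a

theorem integral_exp_neg_mul_sq_sub_gaussianReal {t : ℝ} (ht : 0 ≤ t) (b m : ℝ) (v : ℝ≥0) :
    ∫ x, exp (-(t * (b - x) ^ 2)) ∂gaussianReal m v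
      = (√(1 + 2 * t * v))⁻¹ * exp (-(t * (b - m) ^ 2 / (1 + 2 * t * v))) := by
  rcases eq_or_ne v 0 with rfl | hv
  · simp [gaussianReal_zero_var]
  have hv0 : (0 : ℝ) < v := by positivity
  set u : ℝ := 1 + 2 * t * v
  have hu0 : 0 < u := by positivity
  have hcomplete_sq : ∀ x, gaussianPDFReal m v x * exp (-(t * (b - x) ^ 2))
      = ((√(2 * π * v))⁻¹ * exp (-(t * (b - m) ^ 2 / u)))
        * exp (-(u / (2 * v) * (x - (m + 2 * t * v * (b - m) / u)) ^ 2)) := by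
    intro x
    rw [gaussianPDFReal, mul_assoc, mul_assoc (√(2 * π * v))⁻¹, ← exp_add, ← exp_add]
    congr 2
    field_simp
    ring
  rw [integral_gaussianReal_eq_integral_smul hv]
  simp only [smul_eq_mul, hcomplete_sq, integral_const_mul, integral_exp_neg_mul_sq_sub]
  rw [show π / (u / (2 * v)) = 2 * π * v / u by field_simp, sqrt_div' _ hu0.le]
  have : √(2 * π * v) ≠ 0 := by positivity
  field_simp

theorem integral_prod_prod_pi_pi {ι κ E : Type*} [Fintype ι] [Fintype κ] [MeasurableSpace E]
    (μ : ι → κ → Measure E) [∀ i j, SigmaFinite (μ i j)] (g : ι → κ → E → ℝ) :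
    ∫ D, ∏ i, ∏ j, g i j (D i j) ∂Measure.pi (fun i => Measure.pi (μ i))
      = ∏ i, ∏ j, ∫ x, g i j x ∂μ i j := by
  rw [integral_fintype_prod_eq_prod (fun i (y : κ → E) => ∏ j, g i j (y j))]
  exact Finset.prod_congr rfl fun i _ => integral_fintype_prod_eq_prod _

theorem integral_exp_neg_mul_sum_sq_sub_gaussianReal_pi {ι κ : Type*} [Fintype ι] [Fintype κ]
    {t : ℝ} (ht : 0 ≤ t) (B M : ι → κ → ℝ) (V : ι → κ → ℝ≥0) :
    ∫ D, exp (-(t * ∑ i, ∑ j, (B i j - D i j) ^ 2))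
        ∂Measure.pi (fun i => Measure.pi fun j => gaussianReal (M i j) (V i j))
      = ∏ i, ∏ j, (√(1 + 2 * t * V i j))⁻¹
          * exp (-(t * (B i j - M i j) ^ 2 / (1 + 2 * t * V i j))) := by
  simp only [Finset.mul_sum, ← Finset.sum_neg_distrib, exp_sum]
  rw [integral_prod_prod_pi_pi (fun i j => gaussianReal (M i j) (V i j))
    (fun i j x => exp (-(t * (B i j - x) ^ 2)))]
  simp only [integral_exp_neg_mul_sq_sub_gaussianReal ht]

theorem measure_le_le_ofReal_exp_mul_integral_exp_neg {Ω : Type*} [MeasurableSpace Ω]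
    {μ : Measure Ω} [IsFiniteMeasure μ] {X : Ω → ℝ} (hX : Measurable X) (hX0 : 0 ≤ X)
    {t : ℝ} (ht : 0 ≤ t) (c : ℝ) :
    μ {ω | X ω ≤ c} ≤ ENNReal.ofReal (exp (t * c) * ∫ ω, exp (-(t * X ω)) ∂μ) := by
  have hint : Integrable (fun ω => exp (-t * X ω)) μ := by
    refine .of_bound (by fun_prop) 1 (ae_of_all _ fun ω => ?_)
    rw [norm_of_nonneg (exp_nonneg _), exp_le_one_iff, neg_mul, neg_nonpos]
    exact mul_nonneg ht (hX0 ω)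
  rw [← ofReal_measureReal]
  refine ENNReal.ofReal_le_ofReal ?_
  simpa [mgf, neg_mul] using measure_le_le_exp_mul_mgf c (neg_nonpos.2 ht) hint

theorem rpow_neg_mul_exp_neg_div_le {k s u : ℝ} (hk : 0 < k) (hs : 0 < s) (hu : 0 < u) :
    u ^ (-k) * exp (-(s / u)) ≤ (k / s) ^ k * exp (-k) := by
  set y := s / (k * u) with hy
  have hlhs : u ^ (-k) * exp (-(s / u)) = (k / s * (y * exp (-y))) ^ k := by
    rw [← mul_assoc, mul_rpow (by positivity) (by positivity), ← exp_mul,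
      show k / s * y = u⁻¹ by rw [hy]; field_simp, inv_rpow hu.le, rpow_neg hu.le]
    congr 2
    rw [hy]
    field_simp
  have hrhs : (k / s) ^ k * exp (-k) = (k / s * exp (-1)) ^ k := by
    rw [mul_rpow (by positivity) (by positivity), ← exp_mul, neg_one_mul]
  rw [hlhs, hrhs]
  gcongr
  exact mul_exp_neg_le_exp_neg_one y

theorem prod_inv_sqrt_mul_exp_le {ι : Type*} [Fintype ι] [Nonempty ι] (b : ι → ℝ)
    {u γ a : ℝ} (hu : 0 < u) (hγ : 0 < γ) (ha : 0 < a)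
    (hb : ∑ i, b i ^ 2 = Fintype.card ι * a) :
    ∏ i, ((√u)⁻¹ * exp (-(1 / (2 * γ) * b i ^ 2 / u)))
      ≤ (γ / a) ^ ((Fintype.card ι : ℝ) / 2) * exp (-((Fintype.card ι : ℝ) / 2)) := by
  set N : ℝ := (Fintype.card ι : ℝ)
  have hN : 0 < N := by positivity
  have hprod : ∏ i, ((√u)⁻¹ * exp (-(1 / (2 * γ) * b i ^ 2 / u)))
      = u ^ (-(N / 2)) * exp (-(N * a / (2 * γ) / u)) := by
    rw [Finset.prod_mul_distrib, Finset.prod_const, Finset.card_univ, ← exp_sum,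
      Finset.sum_neg_distrib, ← Finset.sum_div, ← Finset.mul_sum, hb, sqrt_eq_rpow,
      ← rpow_neg hu.le, ← rpow_mul_natCast hu.le]
    congr 2
    · ring
    · field_simp
  rw [hprod]
  calc _ ≤ (N / 2 / (N * a / (2 * γ))) ^ (N / 2) * exp (-(N / 2)) :=
        rpow_neg_mul_exp_neg_div_le (by positivity) (by positivity) hu
    _ = (γ / a) ^ (N / 2) * exp (-(N / 2)) := by congr 2; field_simp

theorem smul_transpose_mul_self_apply_self {m k : Type*} [Fintype m] (c : ℝ) (B : Matrix m k ℝ)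
    (j : k) : (c • (Bᵀ * B)) j j = c * ∑ i, B i j ^ 2 := by
  simp only [Matrix.smul_apply, mul_apply, transpose_apply, smul_eq_mul, ← pow_two]

theorem prod_eq_pow_of_rpow_one_div_eq {ι : Type*} [Fintype ι] [Nonempty ι] {a : ι → ℝ}
    (ha : ∀ i, 0 ≤ a i) {α : ℝ} (h : (∏ i, a i) ^ ((1 : ℝ) / Fintype.card ι) = α) :
    ∏ i, a i = α ^ Fintype.card ι := by
  rw [← h, one_div,
    rpow_inv_natCast_pow (Finset.prod_nonneg fun i _ => ha i) Fintype.card_ne_zero]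

theorem prod_div_rpow_eq {ι : Type*} [Fintype ι] {a : ι → ℝ} (ha : ∀ i, 0 < a i) {α γ : ℝ}
    (hα : 0 < α) (hγ : 0 ≤ γ) (hprod : ∏ i, a i = α ^ Fintype.card ι) (k : ℝ) :
    ∏ i, (γ / a i) ^ k = (γ / α) ^ (Fintype.card ι * k) := by
  rw [Real.finsetProd_rpow _ _ fun i _ => div_nonneg hγ (ha i).le, Finset.prod_div_distrib,
    Finset.prod_const, hprod, Finset.card_univ, ← div_pow, ← rpow_natCast,
    ← rpow_mul (div_nonneg hγ hα.le)]

theorem prod_prod_inv_sqrt_mul_exp_le {ι κ : Type*} [Fintype ι] [Nonempty ι] [Fintype κ]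
    [Nonempty κ] (B : ι → κ → ℝ) {u : κ → ℝ} (hu : ∀ j, 0 < u j) {α γ : ℝ} (hα : 0 < α)
    (hγ : 0 < γ)
    (hmean : (∏ j, 1 / (Fintype.card ι : ℝ) * ∑ i, B i j ^ 2) ^ ((1 : ℝ) / Fintype.card κ) = α) :
    ∏ i, ∏ j, ((√(u j))⁻¹ * exp (-(1 / (2 * γ) * B i j ^ 2 / u j)))
      ≤ (γ / α) ^ ((Fintype.card κ : ℝ) * Fintype.card ι / 2)
        * exp (-((Fintype.card κ : ℝ) * Fintype.card ι / 2)) := by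
  set a : κ → ℝ := fun j => 1 / (Fintype.card ι : ℝ) * ∑ i, B i j ^ 2
  have hprod : ∏ j, a j = α ^ Fintype.card κ :=
    prod_eq_pow_of_rpow_one_div_eq (fun j => by positivity) hmean
  have hapos : ∀ j, 0 < a j := fun j => (show 0 ≤ a j by positivity).lt_of_ne'
    (Finset.prod_ne_zero_iff.1 (hprod ▸ pow_ne_zero _ hα.ne') j (Finset.mem_univ j))
  calc _ = ∏ j, ∏ i, ((√(u j))⁻¹ * exp (-(1 / (2 * γ) * B i j ^ 2 / u j))) := Finset.prod_comm
    _ ≤ ∏ j, ((γ / a j) ^ ((Fintype.card ι : ℝ) / 2) * exp (-((Fintype.card ι : ℝ) / 2))) := by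
        gcongr with j
        exact prod_inv_sqrt_mul_exp_le (fun i => B i j) (hu j) hγ (hapos j)
          (by simp only [a]; field_simp)
    _ = _ := by
        rw [Finset.prod_mul_distrib, prod_div_rpow_eq hapos hα hγ.le hprod, ← exp_sum,
          Finset.sum_const, Finset.card_univ, nsmul_eq_mul, mul_neg, mul_div_assoc]

theorem lemma1_chernoff_bound_general
    (n l : ℕ) (hn : 1 ≤ n) (hl : 1 ≤ l)
    (B : Matrix (Fin n) (Fin l) ℝ) (α : ℝ) (hα : 0 < α)
    (hmean : (∏ i : Fin l, (((1 : ℝ) / (n : ℝ)) • (Bᵀ * B)) i i) ^ ((1 : ℝ) / (l : ℝ)) = α)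
    (S : Finset (Fin l)) (θ : Fin l → ℝ≥0)
    (γ : ℝ) (hγ0 : 0 < γ) :
    (Measure.pi fun _ : Fin n =>
        Measure.pi fun j : Fin l => gaussianReal 0 (if j ∈ S then θ j else 0))
      {D : Fin n → Fin l → ℝ |
        (1 / ((n : ℝ) * (l : ℝ))) * ∑ i : Fin n, ∑ j : Fin l, (B i j - D i j) ^ 2 ≤ γ}
      ≤ ENNReal.ofReal ((γ / α) ^ (((n : ℝ) * (l : ℝ)) / 2)) := by
  have : Nonempty (Fin n) := ⟨⟨0, hn⟩⟩
  have : Nonempty (Fin l) := ⟨⟨0, hl⟩⟩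
  set v : Fin l → ℝ≥0 := fun j => if j ∈ S then θ j else 0
  set t : ℝ := 1 / (2 * γ)
  have hset : {D : Fin n → Fin l → ℝ |
        (1 / ((n : ℝ) * (l : ℝ))) * ∑ i : Fin n, ∑ j : Fin l, (B i j - D i j) ^ 2 ≤ γ}
      = {D | ∑ i : Fin n, ∑ j : Fin l, (B i j - D i j) ^ 2 ≤ γ * (n * l)} := by
    ext D
    simp only [Set.mem_ofPred_eq]
    rw [one_div_mul_eq_div, div_le_iff₀ (by positivity)]
  rw [hset]
  refine (measure_le_le_ofReal_exp_mul_integral_exp_neg (by fun_prop) (fun D => by positivity)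
    (by positivity : 0 ≤ t) _).trans (ENNReal.ofReal_le_ofReal ?_)
  rw [integral_exp_neg_mul_sum_sq_sub_gaussianReal_pi (by positivity) B (fun _ _ => 0)
    (fun _ j => v j)]
  calc _ = exp (n * l / 2) * ∏ i, ∏ j,
        ((√(1 + 2 * t * v j))⁻¹ * exp (-(1 / (2 * γ) * B i j ^ 2 / (1 + 2 * t * v j)))) := by
        simp only [sub_zero]
        congr 2
        simp only [t]
        field_simp
    _ ≤ exp (n * l / 2) * ((γ / α) ^ ((l : ℝ) * n / 2) * exp (-((l : ℝ) * n / 2))) := by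
        gcongr
        simp only [smul_transpose_mul_self_apply_self] at hmean
        simpa using prod_prod_inv_sqrt_mul_exp_le B (fun j => by positivity) hα hγ0
          (by simpa using hmean)
    _ = (γ / α) ^ (((n : ℝ) * (l : ℝ)) / 2) := by
        rw [mul_left_comm, ← exp_add, mul_comm (l : ℝ), add_neg_cancel, exp_zero, mul_one]

/-- **Lemma 1** (Chernoff-type probability bound). Let `B` be a fixed `n × l` real matrix
whose diagonal entries of `(1/n) Bᵀ B` have geometric mean `α > 0`. Let `D` be a random
`n × l` matrix with independent entries, where for `j ∈ S` the `j`-th column is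
`N(0, θ_j I_n)` (`θ_j > 0`) and for `j ∉ S` the `j`-th column is identically zero
(variance `0`, i.e. a point mass at `0`). Then for every `γ ∈ (0, α)`,
`P((1/(nl)) ‖B − D‖_F² ≤ γ) ≤ (γ/α)^{nl/2}`. -/
theorem lemma1_chernoff_bound
    (n l : ℕ) (hn : 1 ≤ n) (hl : 1 ≤ l)
    (B : Matrix (Fin n) (Fin l) ℝ) (α : ℝ) (hα : 0 < α)
    (hmean : (∏ i : Fin l, (((1 : ℝ) / (n : ℝ)) • (Bᵀ * B)) i i) ^ ((1 : ℝ) / (l : ℝ)) = α)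
    (S : Finset (Fin l)) (θ : Fin l → ℝ≥0) (hθ : ∀ j ∈ S, 0 < θ j)
    (γ : ℝ) (hγ0 : 0 < γ) (hγα : γ < α) :
    (Measure.pi fun _ : Fin n =>
        Measure.pi fun j : Fin l => gaussianReal 0 (if j ∈ S then θ j else 0))
      {D : Fin n → Fin l → ℝ |
        (1 / ((n : ℝ) * (l : ℝ))) * ∑ i : Fin n, ∑ j : Fin l, (B i j - D i j) ^ 2 ≤ γ}
      ≤ ENNReal.ofReal ((γ / α) ^ (((n : ℝ) * (l : ℝ)) / 2)) :=
  lemma1_chernoff_bound_general n l hn hl B α hα hmean S θ γ hγ0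
end

section
/- (Lemma 3, determinant lower bound for a product of matrices) Let B ∈ ℝ^{p×q} and D ∈ ℝ^{q×r}, and let σ_b² denote the smallest eigenvalue of BᵀB. Then det( (BD)ᵀ(BD) ) ≥ (σ_b²)^r · det( DᵀD ). -/
/-!
Since `σ_b² • 1 ≤ BᵀB` in the Loewner order, conjugating by `D` gives
`σ_b² • DᵀD ≤ Dᵀ(BᵀB)D = (BD)ᵀ(BD)`, and the determinant is monotone on positive semidefinite
matrices: if `0 ≤ A ≤ B` and `A` is invertible, then `S = √A` is invertible and `S⁻¹BS⁻¹ ≥ 1`,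
so all its eigenvalues are `≥ 1` and `det B = det A · det (S⁻¹BS⁻¹) ≥ det A`.
-/

open Matrix

open scoped MatrixOrder ComplexOrder

namespace Matrix

variable {m n 𝕜 : Type*} [Fintype m] [Fintype n] [RCLike 𝕜]

theorem IsHermitian.smul_one_le_of_le_eigenvalues [DecidableEq n] {A : Matrix n n 𝕜}
    (hA : A.IsHermitian) {c : ℝ} (hc : ∀ i, c ≤ hA.eigenvalues i) : c • (1 : Matrix n n 𝕜) ≤ A := by
  rw [← Algebra.algebraMap_eq_smul_one, algebraMap_le_iff_le_spectrum hA.isSelfAdjoint,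
    hA.spectrum_real_eq_range_eigenvalues]
  rintro _ ⟨i, rfl⟩
  exact hc i

theorem conjTranspose_mul_mul_le_conjTranspose_mul_mul {A B : Matrix m m 𝕜} (hAB : A ≤ B)
    (D : Matrix m n 𝕜) : Dᴴ * A * D ≤ Dᴴ * B * D := by
  rw [le_iff, ← Matrix.sub_mul, ← Matrix.mul_sub]
  exact hAB.conjTranspose_mul_mul_same D

variable [DecidableEq n]

theorem one_le_det_of_one_le {X : Matrix n n ℝ} (hX : 1 ≤ X) : 1 ≤ X.det := by
  have hXh : X.IsHermitian := by simpa using (le_iff.mp hX).isHermitian.add isHermitian_one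
  have hspec : ∀ x ∈ spectrum ℝ X, 1 ≤ x :=
    (algebraMap_le_iff_le_spectrum hXh.isSelfAdjoint).1 (by simpa using hX)
  rw [hXh.det_eq_prod_eigenvalues]
  exact_mod_cast Finset.one_le_prod fun i _ => hspec _ (hXh.eigenvalues_mem_spectrum_real i)

theorem det_le_det_of_le {A B : Matrix n n ℝ} (hA : 0 ≤ A) (hAB : A ≤ B) : A.det ≤ B.det := by
  rcases (nonneg_iff_posSemidef.mp hA).det_nonneg.eq_or_lt with hdet | hdet
  · rw [← hdet]
    exact (nonneg_iff_posSemidef.mp (hA.trans hAB)).det_nonneg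
  set S := CFC.sqrt A
  have hSS : S * S = A := CFC.sqrt_mul_sqrt_self A hA
  have hSdet : IsUnit S.det := by
    refine isUnit_iff_ne_zero.mpr fun h => hdet.ne' ?_
    rw [← hSS, det_mul, h, zero_mul]
  have hSinv : IsSelfAdjoint S⁻¹ := IsHermitian.inv (IsSelfAdjoint.of_nonneg (CFC.sqrt_nonneg A))
  have hone : 1 ≤ S⁻¹ * B * S⁻¹ := by
    calc 1 = S⁻¹ * A * S⁻¹ := by
          rw [← hSS, ← Matrix.mul_assoc, nonsing_inv_mul _ hSdet, Matrix.one_mul,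
            mul_nonsing_inv _ hSdet]
      _ ≤ S⁻¹ * B * S⁻¹ := hSinv.conjugate_le_conjugate hAB
  have hB : B.det = A.det * (S⁻¹ * B * S⁻¹).det := by
    have hinv := det_nonsing_inv_mul_det _ hSdet
    rw [← hSS, det_mul, det_mul, det_mul]
    linear_combination (-B.det * (S⁻¹.det * S.det + 1)) * hinv
  calc A.det = A.det * 1 := (mul_one _).symm
    _ ≤ A.det * (S⁻¹ * B * S⁻¹).det := by gcongr; exact one_le_det_of_one_le hone
    _ = B.det := hB.symm

end Matrix

/-- **Lemma 3** (determinant lower bound for a product of matrices). If `σ_b²` is the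
smallest eigenvalue of the real positive semidefinite matrix `Bᵀ B`, then
`det((BD)ᵀ (BD)) ≥ (σ_b²)^r · det(Dᵀ D)`. -/
theorem lemma3_det_lower_bound
    (p q r : ℕ) (B : Matrix (Fin p) (Fin q) ℝ) (D : Matrix (Fin q) (Fin r) ℝ)
    (hB : (Bᵀ * B).IsHermitian) (σb2 : ℝ)
    (hσ : σb2 = ⨅ i : Fin q, hB.eigenvalues i) :
    σb2 ^ r * (Dᵀ * D).det ≤ ((B * D)ᵀ * (B * D)).det := by
  have hBB : (Bᵀ * B).PosSemidef := by
    simpa using posSemidef_conjTranspose_mul_self B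
  have hσ_le : ∀ i, σb2 ≤ hB.eigenvalues i := fun i =>
    hσ ▸ ciInf_le (Finite.bddBelow_range _) i
  have hσ_nonneg : 0 ≤ σb2 := hσ ▸ Real.iInf_nonneg hBB.eigenvalues_nonneg
  have hDD : 0 ≤ σb2 • (Dᵀ * D) := nonneg_iff_posSemidef.mpr <| by
    simpa using (posSemidef_conjTranspose_mul_self D).smul hσ_nonneg
  have hle : σb2 • (Dᵀ * D) ≤ (B * D)ᵀ * (B * D) := by
    simpa [Matrix.mul_assoc] using
      conjTranspose_mul_mul_le_conjTranspose_mul_mul (hB.smul_one_le_of_le_eigenvalues hσ_le) D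
  calc σb2 ^ r * (Dᵀ * D).det = (σb2 • (Dᵀ * D)).det := by rw [det_smul, Fintype.card_fin]
    _ ≤ ((B * D)ᵀ * (B * D)).det := det_le_det_of_le hDD hle
end

section
/- (Min–max evaluation in the Chernoff bound, proved inside Lemma 1) Let n ≥ 1 and l ≥ 1 be integers and let 0 < γ < α be real numbers. For p < 0 and θ > 0 define g(p, θ) = −l·p·γ + l·p·α/(1 − 2θp/n) − (n·l/2)·ln(1 − 2θp/n). Then min over p < 0 of ( sup over θ > 0 of g(p, θ) ) = −(n·l/2)·ln(α/γ). Moreover, for each fixed p < 0: sup_{θ>0} g(p,θ) = −p·l·γ − n·l/2 − (n·l/2)·ln(−2pα/n) if p ≤ −n/(2α), and sup_{θ>0} g(p,θ) = p·l·(α − γ) if −n/(2α) < p < 0. -/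
open Real Filter Set Topology

private lemma log_ge_aux {x : ℝ} (hx : 0 < x) : 1 - 1/x ≤ Real.log x := by
  have h := Real.log_le_sub_one_of_pos (show (0:ℝ) < 1/x by positivity)
  rw [Real.log_div one_ne_zero (ne_of_gt hx), Real.log_one] at h
  linarith

private lemma tendsto_aux (N L γ α p : ℝ) :
    Tendsto (fun θ : ℝ => -(L*p*γ) + L*p*α/(1 - 2*θ*p/N) - (N*L/2) * Real.log (1 - 2*θ*p/N))
      (𝓝[>] (0:ℝ)) (𝓝 (-(L*p*γ) + L*p*α)) := by
  have h1 : ContinuousAt (fun θ : ℝ => 1 - 2*θ*p/N) 0 := by fun_prop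
  have h2 : ContinuousAt (fun θ : ℝ => -(L*p*γ) + L*p*α/(1 - 2*θ*p/N)
      - (N*L/2) * Real.log (1 - 2*θ*p/N)) 0 := by
    refine ContinuousAt.sub (ContinuousAt.add continuousAt_const ?_)
      (ContinuousAt.mul continuousAt_const ?_)
    · exact continuousAt_const.div h1 (by norm_num)
    · exact ContinuousAt.log h1 (by norm_num)
  have h3 : Tendsto _ (𝓝[>] (0:ℝ)) _ := h2.tendsto.mono_left nhdsWithin_le_nhds
  have hv : (-(L*p*γ) + L*p*α/(1 - 2*(0:ℝ)*p/N) - (N*L/2) * Real.log (1 - 2*(0:ℝ)*p/N))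
      = -(L*p*γ) + L*p*α := by norm_num
  simpa [hv] using h3

set_option maxHeartbeats 1000000 in
/-- **Min–max evaluation in the Chernoff bound** (proved inside Lemma 1). For
`g(p, θ) = −lpγ + lpα/(1 − 2θp/n) − (nl/2) ln(1 − 2θp/n)` with `0 < γ < α`:
the supremum over `θ > 0` is as computed in the two regimes of `p < 0`, and the minimum
over `p < 0` of the supremum equals `−(nl/2) ln(α/γ)` (and is attained). -/
theorem minmax_chernoff_evaluation
    (n l : ℕ) (hn : 1 ≤ n) (hl : 1 ≤ l) (γ α : ℝ) (hγ : 0 < γ) (hγα : γ < α)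
    (g : ℝ → ℝ → ℝ)
    (hg : ∀ p θ : ℝ, g p θ =
      -((l : ℝ) * p * γ) + (l : ℝ) * p * α / (1 - 2 * θ * p / (n : ℝ))
        - ((n : ℝ) * (l : ℝ) / 2) * Real.log (1 - 2 * θ * p / (n : ℝ))) :
    (∀ p : ℝ, p < 0 → p ≤ -(n : ℝ) / (2 * α) →
        (⨆ θ : {θ : ℝ // 0 < θ}, g p θ)
          = -(p * (l : ℝ) * γ) - (n : ℝ) * (l : ℝ) / 2
              - ((n : ℝ) * (l : ℝ) / 2) * Real.log (-(2 * p * α) / (n : ℝ))) ∧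
    (∀ p : ℝ, -(n : ℝ) / (2 * α) < p → p < 0 →
        (⨆ θ : {θ : ℝ // 0 < θ}, g p θ) = p * (l : ℝ) * (α - γ)) ∧
    IsLeast {y : ℝ | ∃ p : ℝ, p < 0 ∧ y = ⨆ θ : {θ : ℝ // 0 < θ}, g p θ}
      (-((n : ℝ) * (l : ℝ) / 2) * Real.log (α / γ)) := by
  have hα : 0 < α := hγ.trans hγα
  set N : ℝ := (n : ℝ) with hNdef
  set L : ℝ := (l : ℝ) with hLdef
  have hN : 0 < N := by rw [hNdef]; exact_mod_cast hn
  have hL : 0 < L := by rw [hLdef]; exact_mod_cast hl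
  have hc : 0 < N*L/2 := by positivity
  haveI : Nonempty {θ : ℝ // 0 < θ} := ⟨⟨1, one_pos⟩⟩
  -- upper bound, case 1
  have hub1 : ∀ p : ℝ, p < 0 → p ≤ -N/(2*α) → ∀ θ : ℝ, 0 < θ →
      g p θ ≤ -(p*L*γ) - N*L/2 - (N*L/2) * Real.log (-(2*p*α)/N) := by
    intro p hp hpa θ hθ
    rw [hg]
    set t : ℝ := 1 - 2*θ*p/N with htdef
    have htneg : 2*θ*p/N < 0 := div_neg_of_neg_of_pos (by nlinarith) hN
    have ht1 : 1 < t := by rw [htdef]; linarith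
    have ht0 : 0 < t := by linarith
    set ts : ℝ := -(2*p*α)/N with htsdef
    have hpa' : p * (2*α) ≤ -N := (le_div_iff₀ (by positivity)).mp hpa
    have hts1 : 1 ≤ ts := by
      rw [htsdef, le_div_iff₀ hN]
      nlinarith
    have hts0 : 0 < ts := lt_of_lt_of_le one_pos hts1
    have e : L*p*α = -(N*L/2)*ts := by
      rw [htsdef]
      field_simp
    have key : Real.log ts - Real.log t ≤ ts/t - 1 := by
      have h := Real.log_le_sub_one_of_pos (show (0:ℝ) < ts/t by positivity)
      rwa [Real.log_div (ne_of_gt hts0) (ne_of_gt ht0)] at h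
    have e2 : L*p*α/t = -((N*L/2)*(ts/t)) := by rw [e]; ring
    rw [e2]
    nlinarith [mul_le_mul_of_nonneg_left key (le_of_lt hc)]
  -- upper bound, case 2
  have hub2 : ∀ p : ℝ, -N/(2*α) < p → p < 0 → ∀ θ : ℝ, 0 < θ →
      g p θ ≤ p*L*(α-γ) := by
    intro p hpa hp θ hθ
    rw [hg]
    set t : ℝ := 1 - 2*θ*p/N with htdef
    have htneg : 2*θ*p/N < 0 := div_neg_of_neg_of_pos (by nlinarith) hN
    have ht1 : 1 < t := by rw [htdef]; linarith
    have ht0 : 0 < t := by linarith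
    have hlog : 1 - 1/t ≤ Real.log t := log_ge_aux ht0
    have hpa' : -N < p * (2*α) := (div_lt_iff₀ (by positivity)).mp hpa
    have h1 : -(L*p*α) ≤ N*L/2 := by nlinarith
    have h2 : (0:ℝ) ≤ 1 - 1/t := by
      have : 1/t ≤ 1 := by rw [div_le_one ht0]; linarith
      linarith
    have hA := mul_le_mul_of_nonneg_right h1 h2
    have hB := mul_le_mul_of_nonneg_left hlog (le_of_lt hc)
    have e1 : -(L*p*α)*(1-1/t) = L*p*α/t - L*p*α := by ring
    rw [e1] at hA
    have e2 : p*L*(α-γ) = -(L*p*γ) + L*p*α := by ring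
    rw [e2]
    linarith [hA, hB]
  -- sup evaluation, case 1
  have hsup1 : ∀ p : ℝ, p < 0 → p ≤ -N/(2*α) →
      (⨆ θ : {θ : ℝ // 0 < θ}, g p θ)
        = -(p*L*γ) - N*L/2 - (N*L/2) * Real.log (-(2*p*α)/N) := by
    intro p hp hpa
    apply IsLUB.ciSup_eq
    constructor
    · rintro x ⟨⟨θ, hθ⟩, rfl⟩
      exact hub1 p hp hpa θ hθ
    · intro b hb
      set ts : ℝ := -(2*p*α)/N with htsdef
      have hpa' : p * (2*α) ≤ -N := (le_div_iff₀ (by positivity)).mp hpa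
      have hts1 : 1 ≤ ts := by
        rw [htsdef, le_div_iff₀ hN]
        nlinarith
      have hts0 : 0 < ts := lt_of_lt_of_le one_pos hts1
      have e : L*p*α = -(N*L/2)*ts := by
        rw [htsdef]; field_simp
      rcases eq_or_lt_of_le hts1 with hts | hts
      · -- ts = 1, use the limit at θ → 0⁺
        have hval : -(p*L*γ) - N*L/2 - (N*L/2) * Real.log ts = -(L*p*γ) + L*p*α := by
          rw [← hts, Real.log_one, e, ← hts]
          ring
        rw [hval]
        by_contra hcon
        push_neg at hcon
        have hev := (tendsto_aux N L γ α p).eventually (eventually_gt_nhds hcon)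
        obtain ⟨θ, hθval, hθmem⟩ := (hev.and eventually_mem_nhdsWithin).exists
        have := hb ⟨⟨θ, hθmem⟩, rfl⟩
        simp only [hg] at this
        exact absurd this (not_le.mpr hθval)
      · -- ts > 1, sup attained
        have hp2 : (0:ℝ) < -(2*p) := by linarith
        set θ0 : ℝ := N*(ts-1)/(-(2*p)) with hθ0def
        have hθ0 : 0 < θ0 := by
          rw [hθ0def]
          exact div_pos (mul_pos hN (by linarith)) hp2
        have hθt : 1 - 2*θ0*p/N = ts := by
          rw [hθ0def]
          field_simp [hN.ne', hp.ne]
          ring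
        have hgval : g p θ0 = -(p*L*γ) - N*L/2 - (N*L/2) * Real.log ts := by
          rw [hg, hθt]
          have : L*p*α/ts = -(N*L/2) := by
            rw [e]
            field_simp
          rw [this]
          ring
        rw [← hgval]
        exact hb ⟨⟨θ0, hθ0⟩, rfl⟩
  -- sup evaluation, case 2
  have hsup2 : ∀ p : ℝ, -N/(2*α) < p → p < 0 →
      (⨆ θ : {θ : ℝ // 0 < θ}, g p θ) = p*L*(α-γ) := by
    intro p hpa hp
    apply IsLUB.ciSup_eq
    constructor
    · rintro x ⟨⟨θ, hθ⟩, rfl⟩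
      exact hub2 p hpa hp θ hθ
    · intro b hb
      have hval : p*L*(α-γ) = -(L*p*γ) + L*p*α := by ring
      rw [hval]
      by_contra hcon
      push_neg at hcon
      have hev := (tendsto_aux N L γ α p).eventually (eventually_gt_nhds hcon)
      obtain ⟨θ, hθval, hθmem⟩ := (hev.and eventually_mem_nhdsWithin).exists
      have := hb ⟨⟨θ, hθmem⟩, rfl⟩
      simp only [hg] at this
      exact absurd this (not_le.mpr hθval)
  refine ⟨hsup1, hsup2, ?_, ?_⟩
  · -- membership: attained at p₀ = -N/(2γ)
    refine ⟨-N/(2*γ), ?_, ?_⟩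
    · rw [neg_div, neg_lt_zero]
      positivity
    · have hp0 : -N/(2*γ) < 0 := by rw [neg_div, neg_lt_zero]; positivity
      have hp0a : -N/(2*γ) ≤ -N/(2*α) := by
        rw [div_le_div_iff₀ (by positivity) (by positivity)]
        nlinarith
      rw [hsup1 _ hp0 hp0a]
      have harg : -(2*(-N/(2*γ))*α)/N = α/γ := by
        field_simp
      rw [harg]
      have h0 : -((-N/(2*γ))*L*γ) = N*L/2 := by
        field_simp
      rw [h0]
      ring
  · -- lower bound
    rintro y ⟨p, hp, rfl⟩
    rcases le_or_gt p (-N/(2*α)) with h | h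
    · rw [hsup1 p hp h]
      have hu0 : 0 < -(2*p*γ)/N := div_pos (by nlinarith) hN
      have hlogsplit : Real.log (-(2*p*α)/N)
          = Real.log (-(2*p*γ)/N) + Real.log (α/γ) := by
        rw [← Real.log_mul (ne_of_gt hu0) (ne_of_gt (div_pos hα hγ))]
        congr 1
        field_simp
      rw [hlogsplit]
      set u : ℝ := -(2*p*γ)/N with hudef
      have hcu : -(p*L*γ) = (N*L/2)*u := by
        rw [hudef]; field_simp
      have key := Real.log_le_sub_one_of_pos hu0
      nlinarith [mul_le_mul_of_nonneg_left key (le_of_lt hc), hcu]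
    · rw [hsup2 p h hp]
      have hlog := log_ge_aux (show (0:ℝ) < α/γ by positivity)
      rw [one_div_div] at hlog
      have h2 : -N/(2*α)*(L*(α-γ)) ≤ p*(L*(α-γ)) :=
        mul_le_mul_of_nonneg_right h.le (mul_nonneg hL.le (by linarith))
      have h3 : -N/(2*α)*(L*(α-γ)) = -(N*L/2)*(1-γ/α) := by
        field_simp
      nlinarith [h2, h3, mul_le_mul_of_nonneg_left hlog (le_of_lt hc)]
end

section
/- (Appendix C, evaluation of c(W) for the structured two-column matrix) Let k ≥ 2 be an even integer and α > 0. Let W = [w₁, w₂] ∈ ℝ^{k×2}, where w₁ is the all-ones vector in ℝ^k and w₂(i) = 1 for 1 ≤ i ≤ k/2, w₂(i) = −1 for k/2 < i ≤ k. Then min over nonempty T ⊆ [k] of (1/(2|T|))·log det( I₂ + α·W_Tᵀ W_T ) = (1/k)·log(1 + k·α), i.e., the minimum is attained at T = [k]. -/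
open Matrix Real

noncomputable section

/-- `W_T^⊺ W_T` for a subset `T` of the rows of `W`. -/
def gramSub {k l : ℕ} (W : Matrix (Fin k) (Fin l) ℝ) (T : Finset (Fin k)) :
    Matrix (Fin l) (Fin l) ℝ :=
  (W.submatrix (fun i : T => (i : Fin k)) id)ᵀ * W.submatrix (fun i : T => (i : Fin k)) id

/-!
Split a nonempty `T` into `A = {i ∈ T | w₂ i = 1}` and `B = {i ∈ T | w₂ i = -1}`. Then `W_Tᵀ W_T`
has diagonal `|T| = |A| + |B|` and off-diagonal `|A| - |B|`, so
`det (I₂ + α W_Tᵀ W_T) = (1 + 2α|A|)(1 + 2α|B|)`. Both parts have at most `k/2` elements, and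
concavity of `u ↦ log (1 + u)` gives `log (1 + 2αn) ≥ (2n/k) log (1 + kα)` for `2n ≤ k`; adding
the two bounds gives `log det ≥ (2|T|/k) log (1 + kα)`, with equality for `T = [k]`, where
`|A| = |B| = k/2`.
-/

open Finset

theorem gramSub_apply {k l : ℕ} (W : Matrix (Fin k) (Fin l) ℝ) (T : Finset (Fin k))
    (i j : Fin l) : gramSub W T i j = ∑ x ∈ T, W x i * W x j := by
  rw [gramSub, mul_apply, ← sum_coe_sort T]
  rfl

theorem det_one_add_smul_gramSub_of_sign_column {k : ℕ} (α : ℝ) (W : Matrix (Fin k) (Fin 2) ℝ)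
    (p : Fin k → Prop) [DecidablePred p]
    (hW : ∀ i, W i 0 = 1 ∧ W i 1 = if p i then 1 else -1) (T : Finset (Fin k)) :
    (1 + α • gramSub W T).det
      = (1 + 2 * α * #{i ∈ T | p i}) * (1 + 2 * α * #{i ∈ T | ¬p i}) := by
  have hsq (x : Fin k) : ∀ j : Fin 2, W x j * W x j = 1 := by
    rw [Fin.forall_fin_two, (hW x).1, (hW x).2]
    split_ifs <;> norm_num
  have hdiag (j : Fin 2) : gramSub W T j j = #{i ∈ T | p i} + #{i ∈ T | ¬p i} := by
    rw [gramSub_apply, sum_congr rfl fun x _ => hsq x j, ← Nat.cast_add,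
      card_filter_add_card_filter_not, sum_const, nsmul_one]
  have hoff : ∑ x ∈ T, W x 0 * W x 1 = #{i ∈ T | p i} - #{i ∈ T | ¬p i} := by
    simp only [(hW _).1, (hW _).2, one_mul, sum_ite, sum_const, nsmul_eq_mul, mul_one,
      mul_neg]
    ring
  have hoff' : ∑ x ∈ T, W x 1 * W x 0 = #{i ∈ T | p i} - #{i ∈ T | ¬p i} := by
    simpa only [mul_comm] using hoff
  rw [det_fin_two]
  simp only [Matrix.add_apply, Matrix.smul_apply, smul_eq_mul, hdiag, gramSub_apply, hoff, hoff',
    one_apply_eq, one_apply_ne, ne_eq, zero_ne_one, one_ne_zero, not_false_eq_true, zero_add]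
  ring

theorem card_filter_not_val_lt {n m : ℕ} : #{i : Fin n | ¬(i : ℕ) < m} = n - min n m := by
  have := card_filter_add_card_filter_not (s := univ) (fun i : Fin n => (i : ℕ) < m)
  rw [Fin.card_filter_val_lt, card_univ, Fintype.card_fin] at this
  omega

theorem mul_logb_one_add_le_logb_one_add_mul {b t x : ℝ} (hb : 1 < b) (ht₀ : 0 ≤ t)
    (ht₁ : t ≤ 1) (hx : -1 < x) : t * logb b (1 + x) ≤ logb b (1 + t * x) := by
  have hconc := strictConcaveOn_log_Ioi.concaveOn.2 (Set.mem_Ioi.mpr one_pos)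
    (Set.mem_Ioi.mpr (by linarith : (0 : ℝ) < 1 + x)) (sub_nonneg.mpr ht₁) ht₀ (sub_add_cancel 1 t)
  simp only [smul_eq_mul, log_one, mul_zero, zero_add, mul_one] at hconc
  rw [show 1 - t + t * (1 + x) = 1 + t * x by ring] at hconc
  rw [logb, logb, ← mul_div_assoc]
  exact div_le_div_of_nonneg_right hconc (log_pos hb).le

section HalfSigns

variable {k : ℕ} {α : ℝ} {W : Matrix (Fin k) (Fin 2) ℝ}

theorem card_filter_val_lt_half_le (hk : Even k) (T : Finset (Fin k)) :
    #{i ∈ T | i.val < k / 2} ≤ k / 2 ∧ #{i ∈ T | ¬i.val < k / 2} ≤ k / 2 := by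
  have hsub (q : Fin k → Prop) [DecidablePred q] : #{i ∈ T | q i} ≤ #{i : Fin k | q i} :=
    card_le_card (filter_subset_filter q (subset_univ T))
  have hA := hsub (fun i => i.val < k / 2)
  have hB := hsub (fun i => ¬i.val < k / 2)
  rw [Fin.card_filter_val_lt] at hA
  rw [card_filter_not_val_lt] at hB
  obtain ⟨r, rfl⟩ := hk
  omega

variable (hW : ∀ i : Fin k, W i 0 = 1 ∧ W i 1 = (if (i : ℕ) < k / 2 then (1 : ℝ) else -1))
include hW

theorem det_one_add_smul_gramSub_univ (hk : Even k) :
    (1 + α • gramSub W univ).det = (1 + k * α) ^ 2 := by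
  rw [det_one_add_smul_gramSub_of_sign_column α W _ hW, Fin.card_filter_val_lt,
    card_filter_not_val_lt]
  obtain ⟨r, rfl⟩ := hk
  rw [show min (r + r) ((r + r) / 2) = r by omega, show r + r - r = r by omega]
  push_cast
  ring

theorem two_mul_card_div_mul_logb_le_logb_det (hk : Even k) (hk₀ : 0 < k) (hα : 0 < α)
    (T : Finset (Fin k)) :
    2 * #T / k * logb 2 (1 + k * α) ≤ logb 2 (1 + α • gramSub W T).det := by
  obtain ⟨ha, hb⟩ := card_filter_val_lt_half_le hk T
  have hkR : (0 : ℝ) < k := Nat.cast_pos.mpr hk₀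
  have half_bound (n : ℕ) (hn : n ≤ k / 2) :
      2 * n / k * logb 2 (1 + k * α) ≤ logb 2 (1 + 2 * α * n) := by
    have hnk : 2 * (n : ℝ) ≤ k := by exact_mod_cast (by omega : 2 * n ≤ k)
    have := mul_logb_one_add_le_logb_one_add_mul one_lt_two (by positivity)
      ((div_le_one hkR).mpr hnk) (by nlinarith : -1 < (k : ℝ) * α)
    rwa [show 2 * (n : ℝ) / k * (k * α) = 2 * α * n by field_simp] at this
  have hdet := det_one_add_smul_gramSub_of_sign_column α W _ hW T
  have hpos (n : ℕ) : (0 : ℝ) < 1 + 2 * α * n := by positivity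
  calc 2 * #T / k * logb 2 (1 + k * α)
      = 2 * #{i ∈ T | i.val < k / 2} / k * logb 2 (1 + k * α)
        + 2 * #{i ∈ T | ¬i.val < k / 2} / k * logb 2 (1 + k * α) := by
        rw [← card_filter_add_card_filter_not (fun i : Fin k => i.val < k / 2)]
        push_cast
        ring
    _ ≤ logb 2 (1 + 2 * α * #{i ∈ T | i.val < k / 2})
        + logb 2 (1 + 2 * α * #{i ∈ T | ¬i.val < k / 2}) :=
        add_le_add (half_bound _ ha) (half_bound _ hb)
    _ = logb 2 (1 + α • gramSub W T).det := by
        rw [hdet, logb_mul (hpos _).ne' (hpos _).ne']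

end HalfSigns

theorem appendixC_cW_evaluation_general
    (k : ℕ) (hke : Even k) (α : ℝ) (hα : 0 < α)
    (W : Matrix (Fin k) (Fin 2) ℝ)
    (hW : ∀ i : Fin k, W i 0 = 1 ∧ W i 1 = (if (i : ℕ) < k / 2 then (1 : ℝ) else -1)) :
    (∀ T : Finset (Fin k), T.Nonempty →
        (1 / (k : ℝ)) * Real.logb 2 (1 + (k : ℝ) * α) ≤
          (1 / (2 * (T.card : ℝ))) *
            Real.logb 2 ((1 + α • gramSub W T).det)) ∧
      (1 / (2 * ((Finset.univ : Finset (Fin k)).card : ℝ))) *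
          Real.logb 2 ((1 + α • gramSub W Finset.univ).det)
        = (1 / (k : ℝ)) * Real.logb 2 (1 + (k : ℝ) * α) := by
  constructor
  · intro T hT
    have hT₀ : (0 : ℝ) < #T := Nat.cast_pos.mpr hT.card_pos
    calc 1 / (k : ℝ) * logb 2 (1 + k * α)
        = 1 / (2 * #T) * (2 * #T / k * logb 2 (1 + k * α)) := by field_simp
      _ ≤ 1 / (2 * #T) * logb 2 (1 + α • gramSub W T).det :=
        mul_le_mul_of_nonneg_left
          (two_mul_card_div_mul_logb_le_logb_det hW hke hT.choose.pos hα T) (by positivity)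
  · rw [det_one_add_smul_gramSub_univ hW hke, logb_pow, card_univ, Fintype.card_fin]
    push_cast
    ring

/-- **Appendix C** (evaluation of `c(W)` for the structured two-column matrix). For even
`k ≥ 2`, `W = [𝟙, w₂]` with `w₂ = +1` on the first half and `−1` on the second half, the
minimum over nonempty `T ⊆ [k]` of `(1/(2|T|)) log₂ det(I₂ + α W_Tᵀ W_T)` equals
`(1/k) log₂(1 + kα)`, attained at `T = [k]`. -/
theorem appendixC_cW_evaluation
    (k : ℕ) (hk : 2 ≤ k) (hke : Even k) (α : ℝ) (hα : 0 < α)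
    (W : Matrix (Fin k) (Fin 2) ℝ)
    (hW : ∀ i : Fin k, W i 0 = 1 ∧ W i 1 = (if (i : ℕ) < k / 2 then (1 : ℝ) else -1)) :
    (∀ T : Finset (Fin k), T.Nonempty →
        (1 / (k : ℝ)) * Real.logb 2 (1 + (k : ℝ) * α) ≤
          (1 / (2 * (T.card : ℝ))) *
            Real.logb 2 ((1 + α • gramSub W T).det)) ∧
      (1 / (2 * ((Finset.univ : Finset (Fin k)).card : ℝ))) *
          Real.logb 2 ((1 + α • gramSub W Finset.univ).det)
        = (1 / (k : ℝ)) * Real.logb 2 (1 + (k : ℝ) * α) :=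
  appendixC_cW_evaluation_general k hke α hα W hW
end
end

section
/- (Inequality for large subsets in Appendix C) Let k > 0 and α > 0 be real numbers, and set β₁ = 1 − α²k² and β₂ = 2α(1 + αk). Then for every real t with k/2 ≤ t ≤ k: ln(β₁ + β₂·t)/(2t) ≥ (1/k)·ln(1 + αk). Equivalently, (1/(2t))·ln( 1 + 2αt + 2α²k(t − k/2) ) ≥ (1/k)·ln(1 + αk) for all t ∈ [k/2, k], with equality at t = k/2 and t = k. -/
/-!
With `x = 1 + αk` and `s = 2t/k ∈ [1, 2]`, the argument of the logarithm factors as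
`β₁ + β₂ t = (2 - s) x + (s - 1) x²`, a convex combination of `x` and `x²`. Concavity of `log`
then gives `log (β₁ + β₂ t) ≥ (2 - s) log x + 2 (s - 1) log x = s log x`, which is the claim;
the endpoints `t = k/2` and `t = k` are `s = 1` and `s = 2`.
-/

open Real

lemma mul_log_le_log_convexComb_self_sq {x s : ℝ} (hx : 0 < x) (hs₁ : 1 ≤ s) (hs₂ : s ≤ 2) :
    s * log x ≤ log ((2 - s) * x + (s - 1) * x ^ 2) := by
  have hconc := strictConcaveOn_log_Ioi.concaveOn.2 (Set.mem_Ioi.2 hx)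
    (Set.mem_Ioi.2 (pow_pos hx 2)) (by linarith : (0 : ℝ) ≤ 2 - s) (by linarith : (0 : ℝ) ≤ s - 1)
    (by ring)
  simp only [smul_eq_mul, log_pow] at hconc
  push_cast at hconc
  linarith

/-- **Inequality for large subsets in Appendix C**. For real `k > 0`, `α > 0`, with
`β₁ = 1 − α²k²` and `β₂ = 2α(1 + αk)`, one has for all `t ∈ [k/2, k]`:
`ln(β₁ + β₂ t)/(2t) ≥ (1/k) ln(1 + αk)`, equivalently
`(1/(2t)) ln(1 + 2αt + 2α²k(t − k/2)) ≥ (1/k) ln(1 + αk)`, with equality at `t = k/2`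
and `t = k`. -/
theorem appendixC_large_subsets
    (k α : ℝ) (hk : 0 < k) (hα : 0 < α)
    (β₁ β₂ : ℝ) (hβ₁ : β₁ = 1 - α ^ 2 * k ^ 2) (hβ₂ : β₂ = 2 * α * (1 + α * k)) :
    (∀ t : ℝ, k / 2 ≤ t → t ≤ k →
        (1 / k) * Real.log (1 + α * k) ≤ Real.log (β₁ + β₂ * t) / (2 * t)) ∧
      (∀ t : ℝ, k / 2 ≤ t → t ≤ k →
        (1 / k) * Real.log (1 + α * k)
          ≤ (1 / (2 * t)) * Real.log (1 + 2 * α * t + 2 * α ^ 2 * k * (t - k / 2))) ∧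
      Real.log (β₁ + β₂ * (k / 2)) / (2 * (k / 2)) = (1 / k) * Real.log (1 + α * k) ∧
      Real.log (β₁ + β₂ * k) / (2 * k) = (1 / k) * Real.log (1 + α * k) := by
  subst hβ₁ hβ₂
  have hx : 0 < 1 + α * k := by positivity
  have lower (t : ℝ) (ht₁ : k / 2 ≤ t) (ht₂ : t ≤ k) :
      (1 / k) * log (1 + α * k)
        ≤ log (1 - α ^ 2 * k ^ 2 + 2 * α * (1 + α * k) * t) / (2 * t) := by
    have hs₁ : 1 ≤ 2 * t / k := by rw [le_div_iff₀ hk]; linarith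
    have hs₂ : 2 * t / k ≤ 2 := by rw [div_le_iff₀ hk]; linarith
    have hcomb : 1 - α ^ 2 * k ^ 2 + 2 * α * (1 + α * k) * t
        = (2 - 2 * t / k) * (1 + α * k) + (2 * t / k - 1) * (1 + α * k) ^ 2 := by
      field_simp
      ring
    rw [le_div_iff₀ (by linarith), hcomb]
    calc 1 / k * log (1 + α * k) * (2 * t) = 2 * t / k * log (1 + α * k) := by ring
      _ ≤ _ := mul_log_le_log_convexComb_self_sq hx hs₁ hs₂
  refine ⟨lower, fun t ht₁ ht₂ => ?_, ?_, ?_⟩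
  · rw [one_div_mul_eq_div (2 * t)]
    convert lower t ht₁ ht₂ using 3
    ring
  · rw [show 1 - α ^ 2 * k ^ 2 + 2 * α * (1 + α * k) * (k / 2) = 1 + α * k by ring]
    field_simp
  · rw [show 1 - α ^ 2 * k ^ 2 + 2 * α * (1 + α * k) * k = (1 + α * k) ^ 2 by ring, log_pow]
    field_simp
    ring
end
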